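/- arXiv:1101.5278 — 4 statements merged into one kernel-verified Lean document; each statement's English description precedes it below -/
import Mathlib

section
/- Let G be the square of a cycle of even length ℓ ≥ 6, with vertices x_0,…,x_{ℓ−1} in cyclic order. Then the set {x_0, x_1, x_2, x_3, x_4, x_6, x_8, …, x_{ℓ−2}} induces a subgraph isomorphic to a subdivision of the wheel W_4, and its complement in V(G) induces a connected subgraph. -/
/-!
Among `x_0, …, x_4`, the vertex `x_2` is adjacent to the other four, which form the 4-cycle
`x_0 x_1 x_3 x_4`; so for `ℓ = 6` the set induces `W_4`. Passing from `ℓ` to `ℓ + 2` adds `x_ℓ`,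
whose neighbours in the set are `x_{ℓ-2}` and `x_0`: adjacent in the square of `C_ℓ` but not in
that of `C_{ℓ+2}`, so `x_ℓ` subdivides the edge `x_{ℓ-2} x_0`. The complement consists of the odd
vertices `x_5, x_7, …, x_{ℓ-1}`, consecutive ones at distance `2`.
-/

open SimpleGraph

/-- Subdivide the edge `uv` of `G`: the new vertex is `none`. -/
def SubdivideEdge {V : Type} (G : SimpleGraph V) (u v : V) : SimpleGraph (Option V) :=
  SimpleGraph.fromRel (fun a b =>
    (∃ x y : V, a = some x ∧ b = some y ∧ G.Adj x y ∧ s(x, y) ≠ s(u, v)) ∨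
    (a = none ∧ (b = some u ∨ b = some v)))

/-- `IsSubdivisionOf G H` : `G` is isomorphic to a graph obtained from `H` by
repeatedly subdividing edges. -/
inductive IsSubdivisionOf : {V W : Type} → SimpleGraph V → SimpleGraph W → Prop
  | base {V W : Type} {G : SimpleGraph V} {H : SimpleGraph W} (e : G ≃g H) :
      IsSubdivisionOf G H
  | subdiv {V W U : Type} {G : SimpleGraph V} {H : SimpleGraph W} {S : SimpleGraph U}
      {u v : U} (h : S.Adj u v) (hS : IsSubdivisionOf S H)
      (e : G ≃g SubdivideEdge S u v) : IsSubdivisionOf G H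

def K4 : SimpleGraph (Fin 4) := ⊤

def K5 : SimpleGraph (Fin 5) := ⊤

/-- `K_4` minus one edge. -/
def K4minus : SimpleGraph (Fin 4) := K4.deleteEdges {s((0 : Fin 4), (1 : Fin 4))}

/-- The wheel with `n` rim vertices; the hub is `none`. -/
def Wheel (n : ℕ) : SimpleGraph (Option (Fin n)) :=
  SimpleGraph.fromRel (fun a b =>
    a = none ∨ ∃ i j : Fin n, a = some i ∧ b = some j ∧ (i.val + 1) % n = j.val)

/-- The prism `K_2 × K_3`. -/
def Prism : SimpleGraph (Fin 2 × Fin 3) :=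
  SimpleGraph.boxProd (⊤ : SimpleGraph (Fin 2)) (⊤ : SimpleGraph (Fin 3))

def K33 : SimpleGraph (Fin 3 ⊕ Fin 3) := completeBipartiteGraph (Fin 3) (Fin 3)

/-- `H` is isomorphic to a subdivision of a wheel, the prism, or `K_{3,3}`. -/
def IsWPKSubdivision {V : Type} (H : SimpleGraph V) : Prop :=
  (∃ n, 3 ≤ n ∧ IsSubdivisionOf H (Wheel n)) ∨
    IsSubdivisionOf H Prism ∨ IsSubdivisionOf H K33

/-- The square of a cycle of length `n`. -/
def cycleSq (n : ℕ) : SimpleGraph (Fin n) :=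
  SimpleGraph.fromRel (fun a b => (a.val + 1) % n = b.val ∨ (a.val + 2) % n = b.val)

/-- The cycle of length `n`. -/
def cycleG (n : ℕ) : SimpleGraph (Fin n) :=
  SimpleGraph.fromRel (fun a b => (a.val + 1) % n = b.val)

/-- Membership in the class 𝒞 of (simple) connected graphs of minimum degree at least 4. -/
def InC {V : Type} (G : SimpleGraph V) : Prop :=
  G.Connected ∧ ∀ v : V, 4 ≤ (G.neighborSet v).ncard

/-- Contract the edge `xy` of `G` to the vertex `x` and simplify. -/
def contractEdge {V : Type} (G : SimpleGraph V) (x y : V) :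
    SimpleGraph {z : V // z ≠ y} :=
  SimpleGraph.fromRel (fun a b =>
    G.Adj a.val b.val ∨ (a.val = x ∧ G.Adj y b.val) ∨ (b.val = x ∧ G.Adj a.val y))

/-- `G` is 4-connected: at least 5 vertices and deleting any at most 3 vertices
leaves a connected graph. -/
def FourConnected {V : Type} [Fintype V] (G : SimpleGraph V) : Prop :=
  5 ≤ Fintype.card V ∧
    ∀ s : Finset V, s.card ≤ 3 → (G.induce ((↑s : Set V)ᶜ)).Connected

/-- `G` is 3-connected: at least 4 vertices and deleting any at most 2 vertices
leaves a connected graph. -/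
def ThreeConnected {V : Type} [Fintype V] (G : SimpleGraph V) : Prop :=
  4 ≤ Fintype.card V ∧
    ∀ s : Finset V, s.card ≤ 2 → (G.induce ((↑s : Set V)ᶜ)).Connected

/-- Planarity, encoded via Kuratowski's characterization: no subgraph is a
subdivision of `K_5` or `K_{3,3}`. -/
def KuratowskiPlanar {V : Type} (G : SimpleGraph V) : Prop :=
  ¬ ∃ H : G.Subgraph, IsSubdivisionOf H.coe K5 ∨ IsSubdivisionOf H.coe K33

/-- The friendship graph made of `n` triangles glued at the hub `none`. -/
def FriendshipGraph (n : ℕ) : SimpleGraph (Option (Fin n × Fin 2)) :=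
  SimpleGraph.fromRel (fun a b =>
    a = none ∨ ∃ (i : Fin n) (p q : Fin 2), a = some (i, p) ∧ b = some (i, q))

def IsFriendship {V : Type} (G : SimpleGraph V) : Prop :=
  ∃ n : ℕ, 1 ≤ n ∧ Nonempty (G ≃g FriendshipGraph n)

/-- Membership in the class of (simple) connected graphs of minimum degree at least 2. -/
def InC2 {V : Type} (G : SimpleGraph V) : Prop :=
  G.Connected ∧ ∀ v : V, 2 ≤ (G.neighborSet v).ncard

section SubdivideEdge

variable {V : Type} (G : SimpleGraph V) (u v : V)

@[simp]
theorem subdivideEdge_adj_some_some (x y : V) :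
    (SubdivideEdge G u v).Adj (some x) (some y) ↔ G.Adj x y ∧ s(x, y) ≠ s(u, v) := by
  simp only [SubdivideEdge, fromRel_adj, Option.some_inj, reduceCtorEq, false_and, or_false,
    exists_and_left, exists_eq_left', ne_eq]
  rw [G.adj_comm y x, Sym2.eq_swap, or_self]
  exact and_iff_right_of_imp fun h => h.1.ne

@[simp]
theorem subdivideEdge_adj_none_some (y : V) :
    (SubdivideEdge G u v).Adj none (some y) ↔ y = u ∨ y = v := by
  simp [SubdivideEdge]

@[simp]
theorem subdivideEdge_adj_some_none (x : V) :
    (SubdivideEdge G u v).Adj (some x) none ↔ x = u ∨ x = v := by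
  simp [SubdivideEdge]

@[simp]
theorem subdivideEdge_adj_none_none : ¬ (SubdivideEdge G u v).Adj none none := by
  simp [SubdivideEdge]

end SubdivideEdge

theorem Nat.mod_eq_iff_of_lt_two_mul {x b n : ℕ} (hx : x < 2 * n) (hb : b < n) :
    x % n = b ↔ x = b ∨ x = b + n := by
  rcases lt_or_ge x n with h | h
  · rw [Nat.mod_eq_of_lt h]
    omega
  · rw [Nat.mod_eq_sub_mod h, Nat.mod_eq_of_lt (by omega)]
    omega

-- The cyclic distance of `a ≠ b` is at most `2`.
theorem cycleSq_adj {n : ℕ} (hn : 2 ≤ n) {a b : Fin n} :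
    (cycleSq n).Adj a b ↔ a ≠ b ∧
      (a.val ≤ b.val + 2 ∧ b.val ≤ a.val + 2 ∨ a.val + n ≤ b.val + 2 ∨ b.val + n ≤ a.val + 2) := by
  have ha := a.isLt
  have hb := b.isLt
  simp only [cycleSq, fromRel_adj, ne_eq, Fin.ext_iff,
    Nat.mod_eq_iff_of_lt_two_mul (show a.val + 1 < 2 * n by omega) hb,
    Nat.mod_eq_iff_of_lt_two_mul (show a.val + 2 < 2 * n by omega) hb,
    Nat.mod_eq_iff_of_lt_two_mul (show b.val + 1 < 2 * n by omega) ha,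
    Nat.mod_eq_iff_of_lt_two_mul (show b.val + 2 < 2 * n by omega) ha]
  omega

def wheelSet (n : ℕ) : Set (Fin n) :=
  {i | i.val ≤ 4 ∨ (6 ≤ i.val ∧ Even i.val ∧ i.val ≤ n - 2)}

theorem mem_wheelSet {n : ℕ} {i : Fin n} :
    i ∈ wheelSet n ↔ i.val ≤ 4 ∨ (6 ≤ i.val ∧ i.val % 2 = 0 ∧ i.val + 2 ≤ n) := by
  simp only [wheelSet, Set.mem_ofPred_eq, Nat.even_iff]
  omega

theorem mem_wheelSet_compl {n : ℕ} (hn : Even n) {i : Fin n} :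
    i ∈ (wheelSet n)ᶜ ↔ 5 ≤ i.val ∧ i.val % 2 = 1 := by
  rw [Set.mem_compl_iff, mem_wheelSet]
  have := i.isLt
  rw [Nat.even_iff] at hn
  omega

instance {n : ℕ} : DecidablePred (· ∈ wheelSet n) := fun _ => decidable_of_iff _ mem_wheelSet.symm

def wheelSetSixEquiv : wheelSet 6 ≃ Option (Fin 4) where
  toFun x := ![some 0, some 1, none, some 2, some 3, none] x.1
  invFun o := ⟨o.elim 2 ![0, 1, 3, 4], by revert o; decide⟩
  left_inv := by decide
  right_inv := by decide

def wheelSetSixIso : (cycleSq 6).induce (wheelSet 6) ≃g Wheel 4 where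
  toEquiv := wheelSetSixEquiv
  map_rel_iff' {a b} := by
    revert a b
    simp only [cycleSq, Wheel, induce_adj, fromRel_adj]
    decide

def wheelSetAddTwoEquiv {n : ℕ} (hn : 6 ≤ n) (he : Even n) :
    wheelSet (n + 2) ≃ Option (wheelSet n) where
  toFun x :=
    if h : x.1.val = n then none
    else some ⟨⟨x.1.val, by have := mem_wheelSet.1 x.2; omega⟩, by
      have := mem_wheelSet.1 x.2; rw [Nat.even_iff] at he; exact mem_wheelSet.2 (by dsimp only; omega)⟩
  invFun o := o.elim ⟨⟨n, by omega⟩, mem_wheelSet.2 (by rw [Nat.even_iff] at he; simp; omega)⟩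
    fun y => ⟨⟨y.1.val, by omega⟩, mem_wheelSet.2 (by have := mem_wheelSet.1 y.2; simp; omega)⟩
  left_inv x := by
    by_cases h : x.1.val = n <;> simp [h, Subtype.ext_iff, Fin.ext_iff]
  right_inv o := by
    rcases o with _ | y
    · simp
    · have := y.1.isLt
      simp [Nat.ne_of_lt this]

def wheelSetAddTwoIso {n : ℕ} (hn : 6 ≤ n) (he : Even n) :
    (cycleSq (n + 2)).induce (wheelSet (n + 2)) ≃g
      SubdivideEdge ((cycleSq n).induce (wheelSet n))
        ⟨⟨n - 2, by omega⟩, mem_wheelSet.2 (by rw [Nat.even_iff] at he; simp; omega)⟩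
        ⟨⟨0, by omega⟩, mem_wheelSet.2 (.inl (Nat.zero_le 4))⟩ where
  toEquiv := wheelSetAddTwoEquiv hn he
  map_rel_iff' {a b} := by
    rw [Nat.even_iff] at he
    have ha := mem_wheelSet.1 a.2
    have hb := mem_wheelSet.1 b.2
    have := a.1.isLt
    have := b.1.isLt
    by_cases ha' : a.1.val = n <;> by_cases hb' : b.1.val = n <;>
      simp only [wheelSetAddTwoEquiv, Equiv.coe_fn_mk, ha', hb', dite_true, dite_false,
        subdivideEdge_adj_some_some, subdivideEdge_adj_none_some, subdivideEdge_adj_some_none,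
        subdivideEdge_adj_none_none, induce_adj, cycleSq_adj (show 2 ≤ n by omega),
        cycleSq_adj (show 2 ≤ n + 2 by omega), ne_eq, Sym2.eq_iff, Subtype.ext_iff, Fin.ext_iff,
        not_true_eq_false, not_false_eq_true, false_and, true_and]
    all_goals omega

theorem isSubdivisionOf_induce_wheelSet {n : ℕ} (hn : 6 ≤ n) (he : Even n) :
    IsSubdivisionOf ((cycleSq n).induce (wheelSet n)) (Wheel 4) := by
  obtain ⟨m, rfl⟩ : ∃ m, n = 2 * m + 6 := ⟨n / 2 - 3, by rw [Nat.even_iff] at he; omega⟩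
  clear hn he
  induction m with
  | zero => exact .base wheelSetSixIso
  | succ m ih =>
    refine .subdiv ?_ ih (wheelSetAddTwoIso (n := 2 * m + 6) (by omega) ⟨m + 3, by omega⟩)
    simp [cycleSq_adj]

theorem SimpleGraph.reachable_of_exists_adj_lt {V : Type*} {G : SimpleGraph V} (f : V → ℕ)
    {r : V} (h : ∀ v, v ≠ r → ∃ w, G.Adj v w ∧ f w < f v) (v : V) : G.Reachable v r := by
  induction hv : f v using Nat.strong_induction_on generalizing v with
  | _ k ih =>
    by_cases hvr : v = r
    · exact hvr ▸ .rfl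
    · obtain ⟨w, hvw, hw⟩ := h v hvr
      exact hvw.reachable.trans (ih (f w) (hv ▸ hw) w rfl)

theorem connected_induce_wheelSet_compl {n : ℕ} (hn : 6 ≤ n) (he : Even n) :
    ((cycleSq n).induce (wheelSet n)ᶜ).Connected := by
  have hmem {i : Fin n} := mem_wheelSet_compl he (i := i)
  let r : ↥(wheelSet n)ᶜ := ⟨⟨5, by omega⟩, hmem.2 (by dsimp only; omega)⟩
  rw [connected_iff_exists_forall_reachable]
  refine ⟨r, fun v => (reachable_of_exists_adj_lt (fun v => v.1.val) (fun w hw => ?_) v).symm⟩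
  have hw5 : w.1.val ≠ 5 := fun h => hw (Subtype.ext (Fin.ext h))
  have hw := hmem.1 w.2
  refine ⟨⟨⟨w.1.val - 2, by omega⟩, hmem.2 (by dsimp only; omega)⟩, ?_, by dsimp only; omega⟩
  rw [induce_adj, cycleSq_adj (by omega)]
  simp only [ne_eq, Fin.ext_iff]
  omega

/-- In the square of an even cycle of length at least 6, the vertex set
`{x_0,…,x_4, x_6, x_8, …, x_{ℓ-2}}` induces a subdivision of the wheel `W_4`, and
its complement induces a connected graph. -/
theorem stmt_6 (n : ℕ) (h : 6 ≤ n) (he : Even n) :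
    IsSubdivisionOf ((cycleSq n).induce
        {i : Fin n | i.val ≤ 4 ∨ (6 ≤ i.val ∧ Even i.val ∧ i.val ≤ n - 2)}) (Wheel 4) ∧
      ((cycleSq n).induce
        {i : Fin n | i.val ≤ 4 ∨ (6 ≤ i.val ∧ Even i.val ∧ i.val ≤ n - 2)}ᶜ).Connected :=
  ⟨isSubdivisionOf_induce_wheelSet h he, connected_induce_wheelSet_compl h he⟩
end

section
/- Every minimal critical graph in the class of simple connected graphs of minimum degree at least 4 is bridgeless, i.e., contains no edge whose deletion disconnects the graph. -/
open SimpleGraph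

private lemma reach_map {V W : Type} {G : SimpleGraph V} {G' : SimpleGraph W} (f : V → W)
    (h : ∀ x y, G.Adj x y → G'.Reachable (f x) (f y)) {u v : V}
    (hr : G.Reachable u v) : G'.Reachable (f u) (f v) := by
  obtain ⟨w⟩ := hr
  induction w with
  | nil => exact SimpleGraph.Reachable.refl _
  | cons h' p ih => exact (h _ _ h').trans ih

/-- Every minimal critical graph in 𝒞 is bridgeless. -/
theorem stmt_10 {V : Type} [Fintype V] (G : SimpleGraph V) (hG : InC G)
    (hmin : ∀ a b : V, G.Adj a b →
      ¬ InC (G.deleteEdges {s(a, b)}) ∧ ¬ InC (contractEdge G a b)) :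
    ∀ a b : V, G.Adj a b → (G.deleteEdges {s(a, b)}).Connected := by
  classical
  intro a b hab
  by_contra hcon
  have hne : a ≠ b := hab.ne
  -- a and b have no common neighbor
  have hcn : ∀ c : V, ¬ (G.Adj a c ∧ G.Adj b c) := by
    rintro c ⟨hac, hbc⟩
    apply hcon
    have hac' : (G.deleteEdges {s(a, b)}).Adj a c := by
      rw [SimpleGraph.deleteEdges_adj]
      refine ⟨hac, ?_⟩
      simp only [Set.mem_singleton_iff, Sym2.eq_iff]
      push_neg
      exact ⟨fun _ => hbc.ne', fun h => absurd h hne⟩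
    have hcb' : (G.deleteEdges {s(a, b)}).Adj c b := by
      rw [SimpleGraph.deleteEdges_adj]
      refine ⟨hbc.symm, ?_⟩
      simp only [Set.mem_singleton_iff, Sym2.eq_iff]
      push_neg
      exact ⟨fun h => absurd h.symm hac.ne, fun _ h => absurd h.symm hne⟩
    have step : ∀ x y, G.Adj x y → (G.deleteEdges {s(a, b)}).Reachable x y := by
      intro x y hxy
      by_cases h : s(x, y) = s(a, b)
      · rcases Sym2.eq_iff.mp h with ⟨rfl, rfl⟩ | ⟨rfl, rfl⟩
        · exact hac'.reachable.trans hcb'.reachable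
        · exact (hac'.reachable.trans hcb'.reachable).symm
      · exact (SimpleGraph.deleteEdges_adj.mpr ⟨hxy, by simpa using h⟩).reachable
    have hnev : Nonempty V := hG.1.nonempty
    exact ⟨fun x y => reach_map id step (hG.1 x y)⟩
  -- the quotient map
  set f : V → {z : V // z ≠ b} := fun z => if h : z = b then ⟨a, hne⟩ else ⟨z, h⟩ with hf
  have hfne : ∀ z (hz : z ≠ b), f z = ⟨z, hz⟩ := by
    intro z hz; simp [hf, hz]
  have hfb : f b = ⟨a, hne⟩ := by simp [hf]
  have hadj : ∀ (p q : {z : V // z ≠ b}),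
      (p ≠ q ∧ (G.Adj p.val q.val ∨ (p.val = a ∧ G.Adj b q.val) ∨ (q.val = a ∧ G.Adj p.val b)))
      → (contractEdge G a b).Adj p q := by
    intro p q ⟨hpq, hr⟩
    rw [contractEdge, SimpleGraph.fromRel_adj]
    refine ⟨hpq, Or.inl ?_⟩
    rcases hr with h | ⟨h1, h2⟩ | ⟨h1, h2⟩
    · exact Or.inl h
    · exact Or.inr (Or.inl ⟨h1, h2⟩)
    · exact Or.inr (Or.inr ⟨h1, h2⟩)
  have hic : InC (contractEdge G a b) := by
    constructor
    · -- connected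
      have step : ∀ x y, G.Adj x y → (contractEdge G a b).Reachable (f x) (f y) := by
        intro x y hxy
        by_cases hx : x = b <;> by_cases hy : y = b
        · subst hx; subst hy; exact absurd rfl hxy.ne
        · subst hx
          rw [hfb, hfne y hy]
          by_cases hya : y = a
          · subst hya; exact SimpleGraph.Reachable.refl _
          · refine (hadj _ _ ⟨?_, Or.inr (Or.inl ⟨rfl, hxy⟩)⟩).reachable
            intro h; exact hya (congrArg Subtype.val h).symm
        · subst hy
          rw [hfb, hfne x hx]
          by_cases hxa : x = a
          · subst hxa; exact SimpleGraph.Reachable.refl _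
          · refine (hadj _ _ ⟨?_, Or.inr (Or.inr ⟨rfl, hxy⟩)⟩).reachable
            intro h; exact hxa (congrArg Subtype.val h)
        · rw [hfne x hx, hfne y hy]
          refine (hadj _ _ ⟨?_, Or.inl hxy⟩).reachable
          intro h; exact hxy.ne (congrArg Subtype.val h)
      have hne2 : Nonempty {z : V // z ≠ b} := ⟨⟨a, hne⟩⟩
      refine ⟨?_⟩
      rintro ⟨x, hx⟩ ⟨y, hy⟩
      have := reach_map f step (hG.1 x y)
      rwa [hfne x hx, hfne y hy] at this
    · -- min degree ≥ 4
      rintro ⟨v, hv⟩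
      by_cases hva : v = a
      · subst v
        have hNa3 : 3 ≤ (G.neighborSet a \ {b}).ncard := by
          have h1 := Set.ncard_diff_singleton_add_one
            (show b ∈ G.neighborSet a from hab) (Set.toFinite _)
          have h4 := hG.2 a
          omega
        have hNb3 : 3 ≤ (G.neighborSet b \ {a}).ncard := by
          have h1 := Set.ncard_diff_singleton_add_one
            (show a ∈ G.neighborSet b from hab.symm) (Set.toFinite _)
          have h4 := hG.2 b
          omega
        have hdisj : Disjoint (G.neighborSet a \ {b}) (G.neighborSet b \ {a}) := by
          rw [Set.disjoint_left]
          rintro c ⟨hc1, _⟩ ⟨hc2, _⟩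
          exact hcn c ⟨hc1, hc2⟩
        have hun : ((G.neighborSet a \ {b}) ∪ (G.neighborSet b \ {a})).ncard
            = (G.neighborSet a \ {b}).ncard + (G.neighborSet b \ {a}).ncard :=
          Set.ncard_union_eq hdisj (Set.toFinite _) (Set.toFinite _)
        have hle : ((G.neighborSet a \ {b}) ∪ (G.neighborSet b \ {a})).ncard
            ≤ ((contractEdge G a b).neighborSet ⟨a, hv⟩).ncard := by
          refine Set.ncard_le_ncard_of_injOn f ?_ ?_ (Set.toFinite _)
          · rintro w (⟨hw1, hw2⟩ | ⟨hw1, hw2⟩)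
            · have haw : G.Adj a w := hw1
              have hwb : w ≠ b := by simpa using hw2
              rw [hfne w hwb, SimpleGraph.mem_neighborSet]
              refine hadj _ _ ⟨?_, Or.inl haw⟩
              intro h; exact haw.ne (congrArg Subtype.val h)
            · have hbw : G.Adj b w := hw1
              have hwa : w ≠ a := by simpa using hw2
              rw [hfne w hbw.ne', SimpleGraph.mem_neighborSet]
              refine hadj _ _ ⟨?_, Or.inr (Or.inl ⟨rfl, hbw⟩)⟩
              intro h; exact hwa (congrArg Subtype.val h).symm
          · intro w1 hw1 w2 hw2 heq
            have hb1 : w1 ≠ b := by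
              rcases hw1 with ⟨_, h⟩ | ⟨h, _⟩
              · simpa using h
              · exact ((SimpleGraph.mem_neighborSet _ _ _).mp h).ne'
            have hb2 : w2 ≠ b := by
              rcases hw2 with ⟨_, h⟩ | ⟨h, _⟩
              · simpa using h
              · exact ((SimpleGraph.mem_neighborSet _ _ _).mp h).ne'
            rw [hfne w1 hb1, hfne w2 hb2] at heq
            exact congrArg Subtype.val heq
        omega
      · -- v ≠ a, v ≠ b : inject N_G(v)
        have hle : (G.neighborSet v).ncard ≤
            ((contractEdge G a b).neighborSet ⟨v, hv⟩).ncard := by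
          refine Set.ncard_le_ncard_of_injOn f ?_ ?_ (Set.toFinite _)
          · intro w hw
            have hvw : G.Adj v w := hw
            by_cases hwb : w = b
            · subst hwb
              rw [hfb, SimpleGraph.mem_neighborSet]
              refine hadj _ _ ⟨?_, Or.inr (Or.inr ⟨rfl, hvw⟩)⟩
              intro h; exact hva (congrArg Subtype.val h)
            · rw [hfne w hwb, SimpleGraph.mem_neighborSet]
              refine hadj _ _ ⟨?_, Or.inl hvw⟩
              intro h; exact hvw.ne (congrArg Subtype.val h)
          · intro w1 hw1 w2 hw2 heq
            have hv1 : G.Adj v w1 := hw1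
            have hv2 : G.Adj v w2 := hw2
            by_cases h1 : w1 = b <;> by_cases h2 : w2 = b
            · rw [h1, h2]
            · exfalso
              subst h1
              rw [hfb, hfne w2 h2] at heq
              have : w2 = a := (congrArg Subtype.val heq).symm
              subst this
              exact hcn v ⟨hv2.symm, hv1.symm⟩
            · exfalso
              subst h2
              rw [hfb, hfne w1 h1] at heq
              have : w1 = a := congrArg Subtype.val heq
              subst this
              exact hcn v ⟨hv1.symm, hv2.symm⟩
            · rw [hfne w1 h1, hfne w2 h2] at heq
              exact congrArg Subtype.val heq
        have := hG.2 v
        omega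
  exact (hmin a b hab).2 hic
end

section
/- The square of a cycle of length ℓ ≥ 5 is a minimal critical graph in the class 𝒞 of simple connected graphs of minimum degree at least 4: for every edge e, both the deletion G − e and the simplified contraction G/e fail to lie in 𝒞. -/
open SimpleGraph

/-!
The square of a cycle of length at least 5 is 4-regular and connected, and each of its edges lies
in a triangle: both `{i, i+1}` and `{i, i+2}` lie in `{i, i+1, i+2}`. Deleting an edge leaves its
endpoints with degree 3. Contracting an edge `ab` merges `a` and `b`, so a common neighbour of `a`
and `b` loses one neighbour and is left with degree 3.
-/

namespace SimpleGraph

variable {V : Type} {G : SimpleGraph V} {a b w : V}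

lemma neighborSet_deleteEdges_singleton (G : SimpleGraph V) (a b : V) :
    (G.deleteEdges {s(a, b)}).neighborSet a = G.neighborSet a \ {b} := by
  ext q
  simp only [mem_neighborSet, deleteEdges_adj, Set.mem_singleton_iff, Set.mem_sdiff,
    Sym2.congr_right]

lemma not_inC_deleteEdges (ha : (G.neighborSet a).ncard = 4) (hab : G.Adj a b) :
    ¬ InC (G.deleteEdges {s(a, b)}) := by
  rintro ⟨-, hdeg⟩
  have := hdeg a
  rw [neighborSet_deleteEdges_singleton,
    Set.ncard_sdiff_singleton_of_mem (show b ∈ G.neighborSet a from hab), ha] at this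
  omega

lemma image_val_neighborSet_contractEdge_subset (hwa : G.Adj w a) (hwb : w ≠ b) :
    Subtype.val '' (contractEdge G a b).neighborSet ⟨w, hwb⟩ ⊆ G.neighborSet w \ {b} := by
  rintro _ ⟨q, hq, rfl⟩
  refine ⟨?_, q.prop⟩
  simp only [contractEdge, mem_neighborSet, fromRel_adj] at hq
  obtain ⟨-, (h | ⟨rfl, -⟩ | ⟨h, -⟩) | (h | ⟨h, -⟩ | ⟨rfl, -⟩)⟩ := hq
  · exact h
  · exact (hwa.ne rfl).elim
  · exact h ▸ hwa
  · exact h.symm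
  · exact h ▸ hwa
  · exact (hwa.ne rfl).elim

lemma not_inC_contractEdge (hw : (G.neighborSet w).ncard = 4) (hwa : G.Adj w a)
    (hwb : G.Adj w b) : ¬ InC (contractEdge G a b) := by
  rintro ⟨-, hdeg⟩
  have hfin : (G.neighborSet w).Finite := Set.finite_of_ncard_pos (by omega)
  have hle : ((contractEdge G a b).neighborSet ⟨w, hwb.ne⟩).ncard ≤ 3 := calc
    _ = (Subtype.val '' (contractEdge G a b).neighborSet ⟨w, hwb.ne⟩).ncard :=
        (Set.ncard_image_of_injective _ Subtype.val_injective).symm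
    _ ≤ (G.neighborSet w \ {b}).ncard :=
        Set.ncard_le_ncard (image_val_neighborSet_contractEdge_subset hwa hwb.ne) hfin.sdiff
    _ = 3 := by rw [Set.ncard_sdiff_singleton_of_mem (show b ∈ G.neighborSet w from hwb), hw]
  have := hdeg ⟨w, hwb.ne⟩
  omega

end SimpleGraph

section CycleSquare

open scoped Fin.CommRing

variable {n : ℕ} [NeZero n]

lemma Fin.natCast_ne_zero_of_lt {k : ℕ} (hk₀ : k ≠ 0) (hk : k < n) : (k : Fin n) ≠ 0 := by
  rw [Ne, CharP.cast_eq_zero_iff (Fin n) n]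
  exact fun hdvd => absurd (Nat.le_of_dvd (Nat.pos_of_ne_zero hk₀) hdvd) (by omega)

lemma cycleSq_adj_iff {a b : Fin n} :
    (cycleSq n).Adj a b ↔ a ≠ b ∧ (b - a = 1 ∨ b - a = 2 ∨ a - b = 1 ∨ a - b = 2) := by
  simp only [cycleSq, fromRel_adj, sub_eq_iff_eq_add, add_comm _ a, add_comm _ b,
    Fin.ext_iff, Fin.val_add, Fin.coe_ofNat_eq_mod, Nat.add_mod_mod, eq_comm]
  tauto

lemma cycleSq_connected : (cycleSq n).Connected := by
  have step (v : Fin n) : (cycleSq n).Reachable v (v + 1) := by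
    by_cases hv : v = v + 1
    · rw [← hv]
    · exact (cycleSq_adj_iff.2 ⟨hv, Or.inl (add_sub_cancel_left v 1)⟩).reachable
  have (v : Fin n) (k : ℕ) : (cycleSq n).Reachable v (v + k) := by
    induction k with
    | zero => simp
    | succ k ih => simpa [add_assoc] using ih.trans (step _)
  refine (connected_iff_exists_forall_reachable _).2 ⟨0, fun w => ?_⟩
  simpa using this 0 w.val

lemma cycleSq_adj_iff_sub_mem (hn : 5 ≤ n) {a b : Fin n} :
    (cycleSq n).Adj a b ↔ b - a ∈ ({1, 2, -1, -2} : Set (Fin n)) := by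
  have h1 : (1 : Fin n) ≠ 0 := mod_cast Fin.natCast_ne_zero_of_lt (k := 1) one_ne_zero (by omega)
  have h2 : (2 : Fin n) ≠ 0 := mod_cast Fin.natCast_ne_zero_of_lt (k := 2) two_ne_zero (by omega)
  have hne : b - a ∈ ({1, 2, -1, -2} : Set (Fin n)) → a ≠ b := by
    rintro h rfl
    simp only [sub_self, Set.mem_insert_iff, Set.mem_singleton_iff, zero_eq_neg] at h
    tauto
  rw [cycleSq_adj_iff, ← neg_sub b a, neg_eq_iff_eq_neg, neg_eq_iff_eq_neg]
  simp only [Set.mem_insert_iff, Set.mem_singleton_iff] at hne ⊢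
  exact ⟨And.right, fun h => ⟨hne h, h⟩⟩

lemma neighborSet_cycleSq (hn : 5 ≤ n) (v : Fin n) :
    (cycleSq n).neighborSet v = (v + ·) '' {1, 2, -1, -2} := by
  ext q
  rw [Set.image_add_left, mem_neighborSet, cycleSq_adj_iff_sub_mem hn, Set.mem_preimage,
    neg_add_eq_sub]

-- The offsets `±1, ±2` differ by `1, 2, 3` or `4`, all nonzero in `Fin n` since `5 ≤ n`.
lemma ncard_neighborSet_cycleSq (hn : 5 ≤ n) (v : Fin n) :
    ((cycleSq n).neighborSet v).ncard = 4 := by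
  have h1 : (1 : Fin n) ≠ 0 := mod_cast Fin.natCast_ne_zero_of_lt (k := 1) one_ne_zero (by omega)
  have h2 : (2 : Fin n) ≠ 0 := mod_cast Fin.natCast_ne_zero_of_lt (k := 2) two_ne_zero (by omega)
  have h3 : (3 : Fin n) ≠ 0 := mod_cast Fin.natCast_ne_zero_of_lt (k := 3) three_ne_zero (by omega)
  have h4 : (4 : Fin n) ≠ 0 := mod_cast Fin.natCast_ne_zero_of_lt (k := 4) four_ne_zero (by omega)
  rw [neighborSet_cycleSq hn, Set.ncard_image_of_injective _ (add_right_injective v),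
    Set.ncard_insert_of_notMem, Set.ncard_insert_of_notMem, Set.ncard_pair]
  · exact fun h => h1 (by linear_combination h)
  · simp only [Set.mem_insert_iff, Set.mem_singleton_iff, not_or]
    exact ⟨fun h => h3 (by linear_combination h), fun h => h4 (by linear_combination h)⟩
  · simp only [Set.mem_insert_iff, Set.mem_singleton_iff, not_or]
    exact ⟨fun h => h1 (by linear_combination -h), fun h => h2 (by linear_combination h),
      fun h => h3 (by linear_combination h)⟩

lemma cycleSq_exists_adj_adj_of_adj (hn : 5 ≤ n) {a b : Fin n} (hab : (cycleSq n).Adj a b) :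
    ∃ w, (cycleSq n).Adj w a ∧ (cycleSq n).Adj w b := by
  simp only [cycleSq_adj_iff_sub_mem hn, Set.mem_insert_iff, Set.mem_singleton_iff] at hab ⊢
  rcases hab with h | h | h | h
  · exact ⟨b + 1, by grind, by grind⟩
  · exact ⟨a + 1, by grind, by grind⟩
  · exact ⟨a + 1, by grind, by grind⟩
  · exact ⟨b + 1, by grind, by grind⟩

end CycleSquare

/-- The square of a cycle of length at least 5 is a minimal critical
graph in 𝒞: it lies in 𝒞, and for every edge both the deletion and the simplified
contraction fail to lie in 𝒞. -/
theorem stmt_11 (n : ℕ) (h : 5 ≤ n) :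
    InC (cycleSq n) ∧ ∀ a b : Fin n, (cycleSq n).Adj a b →
      ¬ InC ((cycleSq n).deleteEdges {s(a, b)}) ∧
        ¬ InC (contractEdge (cycleSq n) a b) := by
  have : NeZero n := ⟨by omega⟩
  refine ⟨⟨cycleSq_connected, fun v => (ncard_neighborSet_cycleSq h v).ge⟩, fun a b hab => ?_⟩
  obtain ⟨w, hwa, hwb⟩ := cycleSq_exists_adj_adj_of_adj h hab
  exact ⟨not_inC_deleteEdges (ncard_neighborSet_cycleSq h a) hab,
    not_inC_contractEdge (ncard_neighborSet_cycleSq h w) hwa hwb⟩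
end

section
/- Every simple connected graph G of minimum degree at least 2 that is not a friendship graph has an edge e such that G − e or the simplified contraction G/e is again a simple connected graph of minimum degree at least 2. -/
open SimpleGraph

/-!
Contracting an edge `ab` of a connected graph keeps it connected, and a vertex of degree at
least 2 can only drop below 2 if it is a vertex with neighbourhood exactly `{a, b}`, or the merged
vertex when `N(a) = {b, z}` and `N(b) = {a, z}`. So if no contraction works, every edge `ab` lies
in a triangle `abz` in which `z`, or both `a` and `b`, have degree 2. Applied to two adjacent
edges this produces a blade `c p q`: a triangle in which `p` and `q` have degree 2. Applied to the
edges at `c`, it puts every neighbour of `c` into a blade at `c`, and by connectivity every vertex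
other than `c` is a neighbour of `c`. So `G` consists of triangles glued at `c`: it is a
friendship graph.
-/

theorem Set.eq_pair_of_subset_of_two_le_ncard {α : Type*} {s : Set α} {x y : α}
    (h : s ⊆ {x, y}) (hs : 2 ≤ s.ncard) : s = {x, y} :=
  Set.eq_of_subset_of_ncard_le h ((Set.ncard_insert_le x {y}).trans (by simpa using hs))

theorem Setoid.exists_equiv_fin_prod_fin_two {α : Type*} [Finite α] (r : Setoid α)
    (hr : ∀ a, Nat.card {b // r b a} = 2) :
    ∃ n, ∃ e : α ≃ Fin n × Fin 2, ∀ a b, (e a).1 = (e b).1 ↔ r a b := by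
  have hfiber (q : Quotient r) : Nat.card {b // Quotient.mk r b = q} = 2 := by
    induction q using Quotient.ind with
    | _ a => rw [← hr a]; exact Nat.card_congr (Equiv.subtypeEquivRight fun b => Quotient.eq)
  let e : α ≃ Fin (Nat.card (Quotient r)) × Fin 2 :=
    (Equiv.sigmaFiberEquiv (Quotient.mk r)).symm.trans <|
      (Equiv.sigmaCongrRight fun q => Finite.equivFinOfCardEq (hfiber q)).trans <|
        (Equiv.sigmaEquivProd _ _).trans <| Equiv.prodCongr (Finite.equivFin _) (Equiv.refl _)
  refine ⟨_, e, fun a b => ?_⟩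
  simp [e, Quotient.eq]

namespace SimpleGraph

variable {V W : Type*} {G : SimpleGraph V}

theorem Connected.of_surjective {H : SimpleGraph W} (hG : G.Connected) (f : V → W)
    (hf : Function.Surjective f) (hadj : ∀ u v, G.Adj u v → f u = f v ∨ H.Adj (f u) (f v)) :
    H.Connected := by
  have := hG.nonempty.map f
  refine ⟨fun x y => ?_⟩
  obtain ⟨u, rfl⟩ := hf x
  obtain ⟨v, rfl⟩ := hf y
  have hstep (u v : V) (huv : G.Adj u v) : Relation.ReflTransGen H.Adj (f u) (f v) :=
    (hadj u v huv).elim (fun h => h ▸ .refl) .single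
  rw [reachable_iff_reflTransGen]
  exact Relation.ReflTransGen.lift' f hstep _ _
    ((reachable_iff_reflTransGen u v).1 (hG.preconnected u v))

theorem Preconnected.forall_of_adj_imp {P : V → Prop} (hG : G.Preconnected) {v₀ : V}
    (h₀ : P v₀) (h : ∀ u v, G.Adj u v → P u → P v) (v : V) : P v := by
  induction (reachable_iff_reflTransGen v₀ v).1 (hG v₀ v) with
  | refl => exact h₀
  | tail _ hadj ih => exact h _ _ hadj ih

theorem adj_iff_of_neighborSet_eq {v a b x : V} (h : G.neighborSet v = {a, b}) :
    G.Adj v x ↔ x = a ∨ x = b := by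
  rw [← mem_neighborSet, h]; rfl

end SimpleGraph

section

variable {V : Type} {G : SimpleGraph V}

def IsBlade (G : SimpleGraph V) (c p q : V) : Prop :=
  G.neighborSet p = {c, q} ∧ G.neighborSet q = {c, p}

namespace IsBlade

variable {c p q : V}

theorem symm (h : IsBlade G c p q) : IsBlade G c q p := ⟨h.2, h.1⟩

theorem ne_left (h : IsBlade G c p q) : p ≠ c := by
  have := adj_iff_of_neighborSet_eq (x := c) h.1
  grind [SimpleGraph.irrefl]

theorem ne (h : IsBlade G c p q) : p ≠ q := by
  have := adj_iff_of_neighborSet_eq (x := q) h.1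
  grind [SimpleGraph.irrefl]

end IsBlade

section Contraction

variable {a b : V}

theorem contractEdge_adj {p q : {z // z ≠ b}} :
    (contractEdge G a b).Adj p q ↔ p ≠ q ∧
      (G.Adj p q ∨ (p.1 = a ∧ G.Adj b q) ∨ (q.1 = a ∧ G.Adj p b)) := by
  simp only [contractEdge, fromRel_adj]
  grind [G.adj_comm]

open Classical in
noncomputable def contractEdgeProj (hab : a ≠ b) (v : V) : {z // z ≠ b} :=
  if h : v = b then ⟨a, hab⟩ else ⟨v, h⟩

theorem contractEdgeProj_of_ne (hab : a ≠ b) {v : V} (hv : v ≠ b) :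
    contractEdgeProj hab v = ⟨v, hv⟩ := dif_neg hv

theorem contractEdgeProj_self (hab : a ≠ b) : contractEdgeProj hab b = ⟨a, hab⟩ := dif_pos rfl

theorem contractEdgeProj_surjective (hab : a ≠ b) : Function.Surjective (contractEdgeProj hab) :=
  fun p => ⟨p, contractEdgeProj_of_ne hab p.2⟩

theorem contractEdgeProj_eq_iff (hab : a ≠ b) {u v : V} :
    contractEdgeProj hab u = contractEdgeProj hab v ↔ u = v ∨ s(u, v) = s(a, b) := by
  unfold contractEdgeProj
  split_ifs <;> grind [Sym2.eq_iff, Subtype.ext_iff]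

theorem contractEdgeProj_adj (hab : a ≠ b) {u v : V} (huv : G.Adj u v)
    (he : s(u, v) ≠ s(a, b)) :
    (contractEdge G a b).Adj (contractEdgeProj hab u) (contractEdgeProj hab v) := by
  refine contractEdge_adj.2 ⟨fun h => ?_, ?_⟩
  · exact ((contractEdgeProj_eq_iff hab).1 h).elim huv.ne he
  · unfold contractEdgeProj
    split_ifs <;> grind [G.adj_comm, SimpleGraph.irrefl]

theorem contractEdge_connected (hab : G.Adj a b) (hG : G.Connected) :
    (contractEdge G a b).Connected := by
  refine hG.of_surjective _ (contractEdgeProj_surjective hab.ne) fun u v huv => ?_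
  by_cases he : s(u, v) = s(a, b)
  · exact .inl ((contractEdgeProj_eq_iff hab.ne).2 (.inr he))
  · exact .inr (contractEdgeProj_adj hab.ne huv he)

theorem two_le_ncard_neighborSet_contractEdge_of_ne [Finite V] (hab : a ≠ b) {v : V}
    (hva : v ≠ a) (hvb : v ≠ b) (hv : 2 ≤ (G.neighborSet v).ncard)
    (hN : G.neighborSet v ≠ {a, b}) :
    2 ≤ ((contractEdge G a b).neighborSet ⟨v, hvb⟩).ncard := by
  obtain ⟨u₁, hu₁, hu₁a, hu₁b⟩ : ∃ u, G.Adj v u ∧ u ≠ a ∧ u ≠ b := by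
    by_contra! h
    exact hN (Set.eq_pair_of_subset_of_two_le_ncard (fun u hu => by grind [mem_neighborSet]) hv)
  obtain ⟨u₂, hu₂, hu₂₁⟩ := Set.exists_ne_of_one_lt_ncard hv u₁
  rw [← contractEdgeProj_of_ne hab hvb]
  refine (Set.one_lt_ncard_iff (Set.toFinite _)).2 ⟨_, _, contractEdgeProj_adj hab hu₁ ?_,
    contractEdgeProj_adj hab hu₂ ?_, fun h => ?_⟩
  · grind [Sym2.eq_iff]
  · grind [Sym2.eq_iff]
  · grind [contractEdgeProj_eq_iff, Sym2.eq_iff]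

theorem two_le_ncard_neighborSet_contractEdge_self [Finite V] (hab : a ≠ b)
    (ha : 2 ≤ (G.neighborSet a).ncard) (hb : 2 ≤ (G.neighborSet b).ncard)
    (hblade : ∀ z, ¬IsBlade G z a b) :
    2 ≤ ((contractEdge G a b).neighborSet ⟨a, hab⟩).ncard := by
  obtain ⟨z, hz, hzb⟩ := Set.exists_ne_of_one_lt_ncard ha b
  obtain ⟨u, hu, hua, hub, huz⟩ : ∃ u, (G.Adj a u ∨ G.Adj b u) ∧ u ≠ a ∧ u ≠ b ∧ u ≠ z := by
    by_contra! h
    refine hblade z ⟨Set.eq_pair_of_subset_of_two_le_ncard (fun u hu => ?_) ha,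
      Set.eq_pair_of_subset_of_two_le_ncard (fun u hu => ?_) hb⟩
    · grind [mem_neighborSet, SimpleGraph.irrefl]
    · grind [mem_neighborSet, SimpleGraph.irrefl]
  have hba : contractEdgeProj hab b = contractEdgeProj hab a := by
    rw [contractEdgeProj_self, contractEdgeProj_of_ne]
  rw [← contractEdgeProj_of_ne hab hab]
  refine (Set.one_lt_ncard_iff (Set.toFinite _)).2 ⟨_, contractEdgeProj hab u,
    contractEdgeProj_adj hab hz ?_, ?_, fun h => ?_⟩
  · grind [Sym2.eq_iff]
  · rcases hu with hu | hu
    · exact contractEdgeProj_adj hab hu (by grind [Sym2.eq_iff])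
    · exact hba ▸ contractEdgeProj_adj hab hu (by grind [Sym2.eq_iff])
  · grind [contractEdgeProj_eq_iff, Sym2.eq_iff]

theorem inC2_contractEdge [Finite V] (hG : InC2 G) (hab : G.Adj a b)
    (hN : ∀ z, G.neighborSet z ≠ {a, b}) (hblade : ∀ z, ¬IsBlade G z a b) :
    InC2 (contractEdge G a b) := by
  refine ⟨contractEdge_connected hab hG.1, fun ⟨v, hvb⟩ => ?_⟩
  by_cases hva : v = a
  · subst hva
    exact two_le_ncard_neighborSet_contractEdge_self hab.ne (hG.2 _) (hG.2 _) hblade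
  · exact two_le_ncard_neighborSet_contractEdge_of_ne hab.ne hva hvb (hG.2 v) (hN v)

end Contraction

namespace FriendshipGraph

variable {n : ℕ}

theorem adj_none_some (x : Fin n × Fin 2) : (FriendshipGraph n).Adj none (some x) := by
  simp [FriendshipGraph]

theorem adj_some_some {x y : Fin n × Fin 2} :
    (FriendshipGraph n).Adj (some x) (some y) ↔ x ≠ y ∧ x.1 = y.1 := by
  obtain ⟨i, p⟩ := x
  obtain ⟨j, q⟩ := y
  simp only [FriendshipGraph, fromRel_adj]
  grind

end FriendshipGraph

theorem nonempty_iso_friendshipGraph {n : ℕ} (c : V) (hc : ∀ v, v ≠ c → G.Adj c v)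
    (e : {v // v ≠ c} ≃ Fin n × Fin 2) (he : ∀ u v, (e u).1 = (e v).1 ↔ u = v ∨ G.Adj u v) :
    Nonempty (G ≃g FriendshipGraph n) := by
  classical
  let E : V ≃ Option (Fin n × Fin 2) := (Equiv.optionSubtypeNe c).symm.trans (Equiv.optionCongr e)
  refine ⟨⟨E, fun {u v} => ?_⟩⟩
  by_cases hu : u = c <;> by_cases hv : v = c
  · subst hu hv; simp
  · subst hu
    simp only [E, Equiv.trans_apply, Equiv.optionSubtypeNe_symm_self,
      Equiv.optionSubtypeNe_symm_of_ne hv, Equiv.optionCongr_apply, Option.map_some,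
      Option.map_none]
    exact iff_of_true (FriendshipGraph.adj_none_some _) (hc v hv)
  · subst hv
    simp only [E, Equiv.trans_apply, Equiv.optionSubtypeNe_symm_self,
      Equiv.optionSubtypeNe_symm_of_ne hu, Equiv.optionCongr_apply, Option.map_some,
      Option.map_none]
    exact iff_of_true (FriendshipGraph.adj_none_some _).symm (hc u hu).symm
  · simp only [E, Equiv.trans_apply, Equiv.optionSubtypeNe_symm_of_ne hu,
      Equiv.optionSubtypeNe_symm_of_ne hv, Equiv.optionCongr_apply, Option.map_some,
      FriendshipGraph.adj_some_some, he, e.injective.ne_iff, ne_eq, Subtype.mk.injEq]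
    exact ⟨fun h => h.2.resolve_left h.1, fun h => ⟨h.ne, .inr h⟩⟩

theorem isFriendship_of_neighborSet_eq_pair [Finite V] (c : V) (hne : ∃ v, v ≠ c)
    (h : ∀ v, v ≠ c → ∃ w, w ≠ c ∧ G.neighborSet v = {c, w}) : IsFriendship G := by
  have hc (v : V) (hv : v ≠ c) : G.Adj c v := by
    obtain ⟨w, -, hN⟩ := h v hv
    exact ((adj_iff_of_neighborSet_eq hN).2 (.inl rfl)).symm
  have hunique {v u u' : V} (hv : v ≠ c) (hu : u ≠ c) (hu' : u' ≠ c) (h₁ : G.Adj v u)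
      (h₂ : G.Adj v u') : u = u' := by
    obtain ⟨w, -, hN⟩ := h v hv
    grind [adj_iff_of_neighborSet_eq hN]
  let r : Setoid {v // v ≠ c} :=
    { r := fun v w => v = w ∨ G.Adj v w
      iseqv := ⟨fun _ => .inl rfl, fun h => h.imp Eq.symm Adj.symm, by
        rintro ⟨v, hv⟩ ⟨w, hw⟩ ⟨u, hu⟩
        simp only [Subtype.mk.injEq]
        grind [hunique hw hv hu, G.adj_symm]⟩ }
  have hr (v : {v // v ≠ c}) : Nat.card {u // r u v} = 2 := by
    obtain ⟨w, hw, hN⟩ := h v v.2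
    have hfiber : {u | r u v} = {v, ⟨w, hw⟩} := by
      ext ⟨u, hu⟩
      simp only [Set.mem_insert_iff, Set.mem_singleton_iff, Subtype.ext_iff]
      change _ ∨ G.Adj u v ↔ _
      grind [adj_iff_of_neighborSet_eq (x := u) hN, G.adj_comm]
    have hvw : v ≠ ⟨w, hw⟩ := fun hvw =>
      G.loopless.irrefl v ((adj_iff_of_neighborSet_eq hN).2 (.inr (congrArg Subtype.val hvw)))
    change Nat.card ({u | r u v} : Set _) = 2
    rw [Nat.card_coe_set_eq, hfiber, Set.ncard_pair hvw]
  obtain ⟨n, e, he⟩ := r.exists_equiv_fin_prod_fin_two hr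
  obtain ⟨v₀, hv₀⟩ := hne
  exact ⟨n, Fin.pos (e ⟨v₀, hv₀⟩).1, nonempty_iso_friendshipGraph c hc e he⟩

theorem exists_isBlade_of_adj
    (hcontr : ∀ a b, G.Adj a b → (∃ z, G.neighborSet z = {a, b}) ∨ ∃ z, IsBlade G z a b)
    {x y : V} (hxy : G.Adj x y) : ∃ c p q, IsBlade G c p q := by
  rcases hcontr x y hxy with ⟨z, hz⟩ | ⟨c, hc⟩
  · have hzx : G.Adj z x := (adj_iff_of_neighborSet_eq hz).2 (.inl rfl)
    rcases hcontr z x hzx with ⟨w, hw⟩ | ⟨w, hw⟩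
    · have hzw : G.Adj z w := ((adj_iff_of_neighborSet_eq hw).2 (.inl rfl)).symm
      have hxw : G.Adj x w := ((adj_iff_of_neighborSet_eq hw).2 (.inr rfl)).symm
      obtain rfl : w = y := ((adj_iff_of_neighborSet_eq hz).1 hzw).resolve_left hxw.ne'
      exact ⟨x, z, w, hz, by rw [hw, Set.pair_comm]⟩
    · have hzw : G.Adj z w := (adj_iff_of_neighborSet_eq hw.1).2 (.inl rfl)
      have hxw : G.Adj x w := (adj_iff_of_neighborSet_eq hw.2).2 (.inl rfl)
      obtain rfl : w = y := ((adj_iff_of_neighborSet_eq hz).1 hzw).resolve_left hxw.ne'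
      exact ⟨w, x, z, hw.2, by rw [hz, Set.pair_comm]⟩
  · exact ⟨c, x, y, hc⟩

theorem IsBlade.exists_isBlade_of_adj {c p q u : V} (hb : IsBlade G c p q)
    (hcontr : ∀ a b, G.Adj a b → (∃ z, G.neighborSet z = {a, b}) ∨ ∃ z, IsBlade G z a b)
    (hu : G.Adj c u) : ∃ w, IsBlade G c u w := by
  by_cases hup : u = p
  · exact ⟨q, hup ▸ hb⟩
  by_cases huq : u = q
  · exact ⟨p, huq ▸ hb.symm⟩
  rcases hcontr c u hu with ⟨w, hw⟩ | ⟨t, ht⟩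
  · have hwu : G.Adj w u := (adj_iff_of_neighborSet_eq hw).2 (.inr rfl)
    rcases hcontr u w hwu.symm with ⟨t, ht⟩ | ⟨t, ht⟩
    · exfalso
      have htw : G.Adj t w := (adj_iff_of_neighborSet_eq ht).2 (.inr rfl)
      have htu : G.Adj t u := (adj_iff_of_neighborSet_eq ht).2 (.inl rfl)
      obtain rfl : t = c := ((adj_iff_of_neighborSet_eq hw).1 htw.symm).resolve_right htu.ne
      have hcp : G.Adj t p := ((adj_iff_of_neighborSet_eq hb.1).2 (.inl rfl)).symm
      obtain rfl : p = w := ((adj_iff_of_neighborSet_eq ht).1 hcp).resolve_left (Ne.symm hup)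
      have hpq : G.Adj p q := (adj_iff_of_neighborSet_eq hb.1).2 (.inr rfl)
      have hqt : G.Adj q t := (adj_iff_of_neighborSet_eq hb.2).2 (.inl rfl)
      exact huq (((adj_iff_of_neighborSet_eq hw).1 hpq).resolve_left hqt.ne).symm
    · have hwc : G.Adj w c := (adj_iff_of_neighborSet_eq hw).2 (.inl rfl)
      obtain rfl : c = t := ((adj_iff_of_neighborSet_eq ht.2).1 hwc).resolve_right hu.ne
      exact ⟨w, ht⟩
  · have hcp : G.Adj c p := ((adj_iff_of_neighborSet_eq hb.1).2 (.inl rfl)).symm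
    have hcq : G.Adj c q := ((adj_iff_of_neighborSet_eq hb.2).2 (.inl rfl)).symm
    have hpt := ((adj_iff_of_neighborSet_eq ht.1).1 hcp).resolve_right (Ne.symm hup)
    have hqt := ((adj_iff_of_neighborSet_eq ht.1).1 hcq).resolve_right (Ne.symm huq)
    exact (hb.ne (hpt.trans hqt.symm)).elim

theorem isFriendship_of_forall_adj [Finite V] (hG : InC2 G)
    (hcontr : ∀ a b, G.Adj a b → (∃ z, G.neighborSet z = {a, b}) ∨ ∃ z, IsBlade G z a b) :
    IsFriendship G := by
  obtain ⟨x⟩ := hG.1.nonempty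
  obtain ⟨y, hxy⟩ := Set.nonempty_of_ncard_ne_zero (s := G.neighborSet x) (by grind [hG.2 x])
  obtain ⟨c, p, q, hb⟩ := exists_isBlade_of_adj hcontr hxy
  have hblade (v : V) : v = c ∨ ∃ w, IsBlade G c v w := by
    refine hG.1.preconnected.forall_of_adj_imp (P := fun v => v = c ∨ ∃ w, IsBlade G c v w)
      (.inl rfl) (fun u v huv hu => ?_) v
    rcases hu with rfl | ⟨w, hw⟩
    · exact .inr (hb.exists_isBlade_of_adj hcontr huv)
    · rcases (adj_iff_of_neighborSet_eq hw.1).1 huv with rfl | rfl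
      · exact .inl rfl
      · exact .inr ⟨u, hw.symm⟩
  refine isFriendship_of_neighborSet_eq_pair c ⟨p, hb.ne_left⟩ fun v hv => ?_
  obtain ⟨w, hw⟩ := (hblade v).resolve_left hv
  exact ⟨w, hw.symm.ne_left, hw.1⟩

end

/-- Every simple connected graph of minimum degree at least 2 which is
not a friendship graph has an edge whose deletion or simplified contraction is again
a simple connected graph of minimum degree at least 2. -/
theorem stmt_14 {V : Type} [Fintype V] (G : SimpleGraph V) (hG : InC2 G)
    (hnf : ¬ IsFriendship G) :
    ∃ a b : V, G.Adj a b ∧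
      (InC2 (G.deleteEdges {s(a, b)}) ∨ InC2 (contractEdge G a b)) := by
  by_contra! h
  refine hnf (isFriendship_of_forall_adj hG fun a b hab => ?_)
  by_contra! hab'
  exact (h a b hab).2 (inC2_contractEdge hG hab hab'.1 hab'.2)
end
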